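/- arXiv:math/0405236 — 7 statements merged into one kernel-verified Lean document; each statement's English description precedes it below -/
import Mathlib

section
/- For integers $e \ge 1$ and $0 \le p \le e$ with $2p \le e$, the alternating sum $\mathcal{N}^{I}_{e,p} = \sum_{i=0}^{2p} (-1)^{p+i} \binom{2p}{i} \frac{(e!)^4}{((e-2p+i)!)^2((e-i)!)^2}$ equals $\frac{(2p)!\,(2e-p)!\,(e!)^2}{p!\,(2e-2p)!\,((e-p)!)^2}$. -/
/-!
Up to the factor `(2p)! (e!)² / (2e-2p)!`, the summand is the term
`(-1)^(a+j) C(a+m, j) C(2m, m-a+j) C(m+a, m-a+j)` of Dixon's identity with `a = p`, `m = e - p`,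
and that sum equals `(2m+a)! / (a! (m!)²)`. The latter is proved by the Wilf–Zeilberger method:
with the rational certificate `dixonCert`, the terms for `a + 1` and for `a` differ by a
telescoping difference, so the sums `S a` satisfy `(a+1) S (a+1) = (2m+a+1) S a`, and induction
on `a` starts from `S 0 = C(2m, m)`.
-/

open Finset

section ChooseRatios

variable {K : Type*} [Field K] [CharZero K]

theorem Nat.cast_choose_succ_succ_eq_div (n k : ℕ) :
    ((n + 1).choose (k + 1) : K) = (n + 1) * n.choose k / (k + 1) := by
  rw [eq_div_iff (Nat.cast_add_one_ne_zero k)]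
  exact_mod_cast (Nat.add_one_mul_choose_eq n k).symm

theorem Nat.cast_choose_succ_right_eq_div (n k : ℕ) :
    (n.choose (k + 1) : K) = n.choose k * (n - k) / (k + 1) := by
  rw [eq_div_iff (Nat.cast_add_one_ne_zero k)]
  rcases le_or_gt k n with hk | hk
  · have h := congrArg (Nat.cast (R := K)) (Nat.choose_succ_right_eq n k)
    push_cast [hk] at h
    exact h
  · simp [Nat.choose_eq_zero_of_lt hk, Nat.choose_eq_zero_of_lt (Nat.lt_succ_of_lt hk)]

theorem Nat.cast_choose_eq_div_succ (n k : ℕ) :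
    (n.choose k : K) = (n + 1).choose k * (n + 1 - k) / (n + 1) := by
  rw [eq_div_iff (Nat.cast_add_one_ne_zero n)]
  rcases le_or_gt k (n + 1) with hk | hk
  · have h := congrArg (Nat.cast (R := K)) (Nat.choose_mul_succ_eq n k)
    push_cast [hk] at h
    exact h
  · simp [Nat.choose_eq_zero_of_lt hk, Nat.choose_eq_zero_of_lt (Nat.lt_of_succ_lt hk)]

end ChooseRatios

def dixonTerm (a m j : ℕ) : ℚ :=
  (-1) ^ (a + j) * ((a + m).choose j : ℚ) * ((2 * m).choose (m - a + j) : ℚ) *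
    ((m + a).choose (m - a + j) : ℚ)

def dixonCert (a m t : ℕ) : ℚ :=
  -(-1) ^ (a + t) * ((m - a + t : ℕ) : ℚ) ^ 2 * ((a + m).choose t : ℚ) *
    ((2 * m).choose (m - a + t) : ℚ) * ((m + a + 1).choose (m - a + t) : ℚ)

theorem dixonCert_succ_sub (a m t : ℕ) (ham : a < m) :
    dixonCert a m (t + 1) - dixonCert a m t =
      2 * ((m : ℚ) + a + 1) *
        ((a + 1) * dixonTerm (a + 1) m (t + 1) - (2 * m + a + 1) * dixonTerm a m t) := by
  obtain ⟨s, hs⟩ : ∃ s, m - a + t = s := ⟨_, rfl⟩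
  have hsq : (s : ℚ) = m - a + t := by
    rw [← hs, Nat.cast_add, Nat.cast_sub ham.le]
  simp only [dixonTerm, dixonCert, hs, show m - (a + 1) + (t + 1) = s by omega,
    show m - a + (t + 1) = s + 1 by omega, show a + 1 + m = a + m + 1 by ring,
    show m + (a + 1) = m + a + 1 by ring]
  rw [Nat.cast_choose_succ_succ_eq_div (a + m) t, Nat.cast_choose_succ_right_eq_div (a + m) t,
    Nat.cast_choose_succ_right_eq_div (2 * m) s, Nat.cast_choose_succ_right_eq_div (m + a + 1) s,
    Nat.cast_choose_eq_div_succ (m + a) s]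
  push_cast
  field_simp
  rw [hsq]
  ring

theorem dixonCert_zero (a m : ℕ) (ham : a < m) :
    dixonCert a m 0 = 2 * ((m : ℚ) + a + 1) * (a + 1) * dixonTerm (a + 1) m 0 := by
  obtain ⟨q, hq⟩ : ∃ q, m - a - 1 = q := ⟨_, rfl⟩
  have hqq : (q : ℚ) = m - a - 1 := by
    rw [← hq, Nat.cast_sub (by omega), Nat.cast_sub ham.le, Nat.cast_one]
  simp only [dixonTerm, dixonCert, show m - a + 0 = q + 1 by omega,
    show m - (a + 1) + 0 = q by omega, show m + (a + 1) = m + a + 1 by ring,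
    Nat.choose_zero_right]
  rw [Nat.cast_choose_succ_right_eq_div (2 * m) q, Nat.cast_choose_succ_right_eq_div (m + a + 1) q]
  push_cast
  field_simp
  rw [hqq]
  ring

theorem dixonCert_two_mul_add_two (a m : ℕ) (ham : a ≤ m) : dixonCert a m (2 * a + 2) = 0 := by
  simp [dixonCert, Nat.choose_eq_zero_of_lt (show m + a + 1 < m - a + (2 * a + 2) by omega)]

theorem dixonTerm_two_mul_add_one (a m : ℕ) (ham : a ≤ m) : dixonTerm a m (2 * a + 1) = 0 := by
  simp [dixonTerm, Nat.choose_eq_zero_of_lt (show m + a < m - a + (2 * a + 1) by omega)]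

theorem sum_dixonTerm_succ (a m : ℕ) (ham : a < m) :
    ((a : ℚ) + 1) * ∑ j ∈ range (2 * (a + 1) + 1), dixonTerm (a + 1) m j =
      (2 * m + a + 1) * ∑ j ∈ range (2 * a + 1), dixonTerm a m j := by
  have telescope := sum_range_sub (dixonCert a m) (2 * a + 2)
  rw [sum_congr rfl fun t _ => dixonCert_succ_sub a m t ham, ← mul_sum, sum_sub_distrib,
    ← mul_sum, ← mul_sum, dixonCert_two_mul_add_two a m ham.le, dixonCert_zero a m ham,
    sum_range_succ (dixonTerm a m), dixonTerm_two_mul_add_one a m ham.le, add_zero] at telescope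
  rw [show 2 * (a + 1) + 1 = 2 * a + 2 + 1 by ring, sum_range_succ']
  refine mul_left_cancel₀ (show (2 * ((m : ℚ) + a + 1)) ≠ 0 by positivity) ?_
  linear_combination telescope

theorem sum_dixonTerm (a m : ℕ) (ham : a ≤ m) :
    ∑ j ∈ range (2 * a + 1), dixonTerm a m j =
      ((2 * m + a).factorial : ℚ) / (a.factorial * m.factorial ^ 2) := by
  induction a with
  | zero =>
    simp [dixonTerm, two_mul, sq, Nat.cast_add_choose]
  | succ a ih =>
    refine mul_left_cancel₀ (show (a : ℚ) + 1 ≠ 0 by positivity) ?_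
    rw [sum_dixonTerm_succ a m ham, ih (by omega), show 2 * m + (a + 1) = 2 * m + a + 1 by ring,
      Nat.factorial_succ, Nat.factorial_succ]
    push_cast
    field_simp

theorem term_eq_mul_dixonTerm (e p i : ℕ) (hp : 2 * p ≤ e) (hi : i ≤ 2 * p) :
    (-1 : ℚ) ^ (p + i) * ((2 * p).choose i : ℚ) * (e.factorial : ℚ) ^ 4 /
        ((e - 2 * p + i).factorial ^ 2 * (e - i).factorial ^ 2) =
      (2 * p).factorial * e.factorial ^ 2 / (2 * e - 2 * p).factorial * dixonTerm p (e - p) i := by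
  simp only [dixonTerm, show p + (e - p) = e by omega, show e - p - p + i = e - 2 * p + i by omega,
    show 2 * (e - p) = 2 * e - 2 * p by omega, show e - p + p = e by omega]
  rw [Nat.cast_choose ℚ hi, Nat.cast_choose ℚ (show i ≤ e by omega),
    Nat.cast_choose ℚ (show e - 2 * p + i ≤ 2 * e - 2 * p by omega),
    Nat.cast_choose ℚ (show e - 2 * p + i ≤ e by omega),
    show 2 * e - 2 * p - (e - 2 * p + i) = e - i by omega,
    show e - (e - 2 * p + i) = 2 * p - i by omega]
  field_simp

theorem stmt_0_general (e p : ℕ) (hp : 2 * p ≤ e) :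
    ∑ i ∈ Finset.range (2 * p + 1),
      ((-1 : ℚ) ^ (p + i) * (Nat.choose (2 * p) i : ℚ) * (Nat.factorial e : ℚ) ^ 4 /
        ((Nat.factorial (e - 2 * p + i) : ℚ) ^ 2 * (Nat.factorial (e - i) : ℚ) ^ 2))
    = (Nat.factorial (2 * p) : ℚ) * (Nat.factorial (2 * e - p) : ℚ) * (Nat.factorial e : ℚ) ^ 2 /
        ((Nat.factorial p : ℚ) * (Nat.factorial (2 * e - 2 * p) : ℚ) * (Nat.factorial (e - p) : ℚ) ^ 2) := by
  rw [sum_congr rfl fun i hi => term_eq_mul_dixonTerm e p i hp (Nat.lt_succ_iff.mp (mem_range.mp hi)),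
    ← mul_sum, sum_dixonTerm p (e - p) (by omega), show 2 * (e - p) + p = 2 * e - p by omega]
  field_simp

theorem stmt_0 (e p : ℕ) (he : 1 ≤ e) (hp : 2 * p ≤ e) :
    ∑ i ∈ Finset.range (2 * p + 1),
      ((-1 : ℚ) ^ (p + i) * (Nat.choose (2 * p) i : ℚ) * (Nat.factorial e : ℚ) ^ 4 /
        ((Nat.factorial (e - 2 * p + i) : ℚ) ^ 2 * (Nat.factorial (e - i) : ℚ) ^ 2))
    = (Nat.factorial (2 * p) : ℚ) * (Nat.factorial (2 * e - p) : ℚ) * (Nat.factorial e : ℚ) ^ 2 /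
        ((Nat.factorial p : ℚ) * (Nat.factorial (2 * e - 2 * p) : ℚ) * (Nat.factorial (e - p) : ℚ) ^ 2) :=
  stmt_0_general e p hp
end

section
/- For integers $e \ge 1$ and $0 \le p \le e$, the sum $\sum_{i=\max(0,2p-e)}^{\min(2p,e)} (-1)^{p+i} \binom{2p}{i} \frac{(e!)^4}{((e-2p+i)!)^2((e-i)!)^2}$ is strictly positive. -/
open Finset

/-!
Put `e = p + q`. Each summand is `((e!)² / (2q)!)²` times `(-1)^(p+i) C(2p,i) C(2q, e-i)²`,
so it suffices that `S = ∑ᵢ (-1)^(p+i) C(2p,i) C(2q, p+q-i)²` is positive. Expanding `C(2p,i)`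
by Vandermonde and reflecting one index gives `S = ∑_{j,k} aⱼ aₖ G_{jk}²` with
`aⱼ = (-1)^j C(p,j)` and `G_{jk} = C(2q, q+j-k)`. By Vandermonde again, `G` is the Gram matrix
of the shifted rows `vⱼ(s) = C(q, s-j)` of Pascal's triangle, so
`S = ∑_{s,t} (∑ⱼ aⱼ vⱼ(s) vⱼ(t))²`, and the term `s = t = 0` equals `1`.
-/

def intChoose (n : ℕ) (z : ℤ) : ℚ := if 0 ≤ z then (n.choose z.toNat : ℚ) else 0

namespace intChoose

@[simp]
theorem natCast (n k : ℕ) : intChoose n k = n.choose k := by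
  simp [intChoose]

theorem of_neg (n : ℕ) {z : ℤ} (hz : z < 0) : intChoose n z = 0 := by
  simp [intChoose, hz.not_ge]

theorem of_lt (n : ℕ) {z : ℤ} (hz : (n : ℤ) < z) : intChoose n z = 0 := by
  lift z to ℕ using by omega
  simp [Nat.choose_eq_zero_of_lt (by omega : n < z)]

theorem symm (n : ℕ) (z : ℤ) : intChoose n (n - z) = intChoose n z := by
  rcases lt_or_ge z 0 with hz | hz
  · rw [of_neg n hz, of_lt n (by omega)]
  rcases lt_or_ge (n : ℤ) z with hn | hn
  · rw [of_lt n hn, of_neg n (by omega)]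
  lift z to ℕ using hz
  rw [show (n : ℤ) - z = (n - z : ℕ) by omega, natCast, natCast, Nat.choose_symm (by omega)]

theorem sum_choose_mul_sub (a b : ℕ) (z : ℤ) :
    ∑ u ∈ range (a + 1), (a.choose u : ℚ) * intChoose b (z - u) = intChoose (a + b) z := by
  rcases lt_or_ge z 0 with hz | hz
  · rw [of_neg _ hz]
    exact sum_eq_zero fun u _ ↦ by rw [of_neg b (by omega), mul_zero]
  lift z to ℕ using hz
  calc ∑ u ∈ range (a + 1), (a.choose u : ℚ) * intChoose b (z - u)
      = ∑ u ∈ range (a + z + 1), (a.choose u : ℚ) * intChoose b (z - u) := by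
        refine sum_subset (range_subset_range.2 (by omega)) fun u _ hu ↦ ?_
        rw [Nat.choose_eq_zero_of_lt (by simp at hu; omega), Nat.cast_zero, zero_mul]
    _ = ∑ u ∈ range (z + 1), (a.choose u : ℚ) * intChoose b (z - u) := by
        refine (sum_subset (range_subset_range.2 (by omega)) fun u _ hu ↦ ?_).symm
        rw [of_neg b (by simp at hu; omega), mul_zero]
    _ = intChoose (a + b) z := by
        rw [natCast, Nat.add_choose_eq, Nat.sum_antidiagonal_eq_sum_range_succ_mk, Nat.cast_sum]
        refine sum_congr rfl fun u hu ↦ ?_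
        rw [mem_range] at hu
        rw [show (z : ℤ) - u = (z - u : ℕ) by omega, natCast, Nat.cast_mul]

theorem sum_range_mul_eq_sum_choose_mul {N : ℕ} (n j : ℕ) (h : j + n ≤ N) (g : ℕ → ℚ) :
    ∑ i ∈ range (N + 1), intChoose n (i - j) * g i
      = ∑ k ∈ range (n + 1), n.choose k * g (j + k) := by
  symm
  calc ∑ k ∈ range (n + 1), (n.choose k : ℚ) * g (j + k)
      = ∑ i ∈ (range (n + 1)).map (addLeftEmbedding j), intChoose n (i - j) * g i := by
        rw [sum_map]
        refine sum_congr rfl fun k _ ↦ ?_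
        simp
    _ = _ := by
        refine sum_subset (fun i hi ↦ ?_) fun i _ hi ↦ ?_
        · simp only [mem_map, mem_range, addLeftEmbedding_apply] at hi ⊢
          omega
        · simp only [mem_map, mem_range, addLeftEmbedding_apply, not_exists, not_and] at hi
          rcases lt_or_ge i j with hij | hij
          · rw [of_neg n (by omega), zero_mul]
          · rw [of_lt n (by specialize hi (i - j); omega), zero_mul]

theorem sum_range_sub_mul_sub {N : ℕ} (q j k : ℕ) (h : j + q ≤ N) :
    ∑ s ∈ range (N + 1), intChoose q (s - j) * intChoose q (s - k)
      = intChoose (2 * q) (q + j - k) := by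
  rw [sum_range_mul_eq_sum_choose_mul q j h (fun s ↦ intChoose q (s - k))]
  calc ∑ u ∈ range (q + 1), (q.choose u : ℚ) * intChoose q ((j + u : ℕ) - k)
      = ∑ u ∈ range (q + 1), (q.choose u : ℚ) * intChoose q ((q + k - j : ℤ) - u) := by
        refine sum_congr rfl fun u _ ↦ ?_
        rw [← symm]
        congr 2
        push_cast
        ring
    _ = _ := by
        rw [sum_choose_mul_sub, ← two_mul, ← symm]
        congr 1
        push_cast
        ring

end intChoose

theorem sum_range_choose_add_mul (m n : ℕ) (g : ℕ → ℚ) :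
    ∑ i ∈ range (m + n + 1), ((m + n).choose i : ℚ) * g i
      = ∑ j ∈ range (m + 1), ∑ k ∈ range (n + 1),
          (m.choose j * n.choose k : ℚ) * g (j + k) := by
  have hv (i : ℕ) :
      ((m + n).choose i : ℚ) = ∑ j ∈ range (m + 1), m.choose j * intChoose n (i - j) := by
    rw [intChoose.sum_choose_mul_sub, intChoose.natCast]
  simp_rw [hv, sum_mul, mul_assoc]
  rw [sum_comm]
  refine sum_congr rfl fun j hj ↦ ?_
  rw [← mul_sum, intChoose.sum_range_mul_eq_sum_choose_mul n j (by simp at hj; omega), mul_sum]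

theorem sum_mul_mul_sq_sum_mul_eq_sum_sq {ι κ R : Type*} [CommSemiring R] (I : Finset ι)
    (K : Finset κ) (a : ι → R) (v : ι → κ → R) :
    ∑ j ∈ I, ∑ k ∈ I, a j * a k * (∑ s ∈ K, v j s * v k s) ^ 2
      = ∑ s ∈ K, ∑ t ∈ K, (∑ j ∈ I, a j * v j s * v j t) ^ 2 := by
  simp_rw [sq, sum_mul_sum, mul_sum, sum_comm (s := I) (t := K)]
  exact sum_congr rfl fun _ _ ↦ sum_congr rfl fun _ _ ↦ sum_congr rfl fun _ _ ↦
    sum_congr rfl fun _ _ ↦ by ring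

theorem sum_choose_mul_neg_one_pow_mul_intChoose_sq_pos (p q : ℕ) :
    0 < ∑ i ∈ range (2 * p + 1),
      ((2 * p).choose i : ℚ) * ((-1) ^ (p + i) * intChoose (2 * q) (p + q - i) ^ 2) := by
  set a : ℕ → ℚ := fun j ↦ (-1) ^ j * p.choose j
  set v : ℕ → ℕ → ℚ := fun j s ↦ intChoose q (s - j)
  have hreflect : ∑ i ∈ range (2 * p + 1),
      ((2 * p).choose i : ℚ) * ((-1) ^ (p + i) * intChoose (2 * q) (p + q - i) ^ 2)
      = ∑ j ∈ range (p + 1), ∑ k ∈ range (p + 1),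
          a j * a k * (∑ s ∈ range (p + q + 1), v j s * v k s) ^ 2 := by
    rw [two_mul, sum_range_choose_add_mul, ← sum_range_reflect]
    refine sum_congr rfl fun j hj ↦ sum_congr rfl fun k _ ↦ ?_
    rw [mem_range] at hj
    dsimp only [a, v]
    rw [intChoose.sum_range_sub_mul_sub q j k (by omega), Nat.add_sub_cancel,
      Nat.choose_symm (by omega)]
    have hsign : (-1 : ℚ) ^ (p + (p - j + k)) = (-1) ^ j * (-1) ^ k := by
      rw [show p + (p - j + k) = 2 * (p - j) + (j + k) by omega, pow_add, pow_mul, neg_one_sq,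
        one_pow, one_mul, pow_add]
    rw [hsign, show (p : ℤ) + q - ((p - j + k : ℕ) : ℤ) = q + j - k by omega]
    ring
  have hwitness : ∑ j ∈ range (p + 1), a j * v j 0 * v j 0 = 1 := by
    rw [sum_eq_single_of_mem 0 (by simp)]
    · simp [a, v, intChoose]
    · intro j _ hj
      simp only [v, intChoose.of_neg q (show ((0 : ℕ) : ℤ) - j < 0 by omega), mul_zero]
  have hzero : 0 ∈ range (p + q + 1) := by simp
  rw [hreflect, sum_mul_mul_sq_sum_mul_eq_sum_sq]
  calc (0 : ℚ) < (∑ j ∈ range (p + 1), a j * v j 0 * v j 0) ^ 2 := by rw [hwitness]; norm_num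
    _ ≤ ∑ t ∈ range (p + q + 1), (∑ j ∈ range (p + 1), a j * v j 0 * v j t) ^ 2 :=
        single_le_sum (f := fun t ↦ (∑ j ∈ range (p + 1), a j * v j 0 * v j t) ^ 2)
          (fun _ _ ↦ sq_nonneg _) hzero
    _ ≤ _ := single_le_sum (f := fun s ↦ ∑ t ∈ range (p + q + 1),
          (∑ j ∈ range (p + 1), a j * v j s * v j t) ^ 2)
          (fun _ _ ↦ sum_nonneg fun _ _ ↦ sq_nonneg _) hzero

theorem factorial_pow_four_div_eq_mul_intChoose_sq {p q i : ℕ} (h₁ : p ≤ q + i)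
    (h₂ : i ≤ p + q) :
    ((p + q).factorial : ℚ) ^ 4 /
        (((p + q + i - 2 * p).factorial : ℚ) ^ 2 * ((p + q - i).factorial : ℚ) ^ 2)
      = (((p + q).factorial : ℚ) ^ 2 / (2 * q).factorial) ^ 2 *
        intChoose (2 * q) (p + q - i) ^ 2 := by
  rw [show (p : ℤ) + q - i = (p + q - i : ℕ) by omega, intChoose.natCast,
    Nat.cast_choose ℚ (by omega : p + q - i ≤ 2 * q),
    show 2 * q - (p + q - i) = p + q + i - 2 * p by omega]
  field_simp

theorem stmt_2_general (e p : ℕ) (hp : p ≤ e) :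
    0 < ∑ i ∈ Finset.Icc (2 * p - e) (min (2 * p) e),
      ((-1 : ℚ) ^ (p + i) * (Nat.choose (2 * p) i : ℚ) * (Nat.factorial e : ℚ) ^ 4 /
        ((Nat.factorial (e + i - 2 * p) : ℚ) ^ 2 * (Nat.factorial (e - i) : ℚ) ^ 2)) := by
  obtain ⟨q, rfl⟩ := Nat.exists_eq_add_of_le hp
  have hterm : ∀ i ∈ Icc (2 * p - (p + q)) (min (2 * p) (p + q)),
      (-1 : ℚ) ^ (p + i) * ((2 * p).choose i : ℚ) * ((p + q).factorial : ℚ) ^ 4 /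
        (((p + q + i - 2 * p).factorial : ℚ) ^ 2 * ((p + q - i).factorial : ℚ) ^ 2)
      = (((p + q).factorial : ℚ) ^ 2 / (2 * q).factorial) ^ 2 *
        (((2 * p).choose i : ℚ) * ((-1) ^ (p + i) * intChoose (2 * q) (p + q - i) ^ 2)) := by
    intro i hi
    rw [mem_Icc] at hi
    rw [mul_div_assoc, factorial_pow_four_div_eq_mul_intChoose_sq (by omega) (by omega)]
    ring
  have hsupport : ∀ i ∈ range (2 * p + 1), i ∉ Icc (2 * p - (p + q)) (min (2 * p) (p + q)) →
      ((2 * p).choose i : ℚ) * ((-1) ^ (p + i) * intChoose (2 * q) (p + q - i) ^ 2) = 0 := by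
    intro i hi_range hi
    rw [mem_range] at hi_range
    rw [mem_Icc, not_and_or] at hi
    rcases hi with hi | hi
    · rw [intChoose.of_lt _ (by omega)]
      ring
    · rw [intChoose.of_neg _ (by omega)]
      ring
  rw [sum_congr rfl hterm, ← mul_sum,
    sum_subset (fun i hi ↦ by simp only [mem_Icc, mem_range] at hi ⊢; omega) hsupport]
  exact mul_pos (by positivity) (sum_choose_mul_neg_one_pow_mul_intChoose_sq_pos p q)

theorem stmt_2 (e p : ℕ) (he : 1 ≤ e) (hp : p ≤ e) :
    0 < ∑ i ∈ Finset.Icc (2 * p - e) (min (2 * p) e),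
      ((-1 : ℚ) ^ (p + i) * (Nat.choose (2 * p) i : ℚ) * (Nat.factorial e : ℚ) ^ 4 /
        ((Nat.factorial (e + i - 2 * p) : ℚ) ^ 2 * (Nat.factorial (e - i) : ℚ) ^ 2)) :=
  stmt_2_general e p hp
end

section
/- For nonnegative integers $s$ and $p$, the sum $\mathcal{J}_{s,p} = \sum_{\beta=0}^{p} \frac{(-1)^\beta\, 2^{2p-2\beta}\,(s+2p-\beta)!}{(2p-2\beta)!\,\beta!}$ equals $\frac{(s+p)!\,(s+\tfrac{3}{2})_p}{p!\,(\tfrac{1}{2})_p}$, where $(a)_n = a(a+1)\cdots(a+n-1)$ is the Pochhammer symbol. -/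
/-!
Substituting `(2m)! = 4^m m! (1/2)_m` and `(s + p + m)! = (s + p)! (s + p + 1)_m` with `m = p - β`,
and writing `(-1)^β (1/2)_p / (1/2)_{p-β} = (1/2 - p)_β`, the `β`-th summand becomes
`(s + p)! / (p! (1/2)_p)` times `C(p, β) (1/2 - p)_β (s + p + 1)_{p-β}`. By the Chu–Vandermonde
identity for rising factorials these terms sum to `((1/2 - p) + (s + p + 1))_p = (s + 3/2)_p`.
-/

open Finset Polynomial

theorem descPochhammer_int_smeval_eq_eval {R : Type*} [CommRing R] (k : ℕ) (r : R) :
    (descPochhammer ℤ k).smeval r = (descPochhammer R k).eval r := by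
  rw [← aeval_eq_smeval, ← eval_map_algebraMap, descPochhammer_map]

theorem ascPochhammer_eval_add {R : Type*} [CommRing R] (x y : R) (n : ℕ) :
    (ascPochhammer R n).eval (x + y) = ∑ k ∈ range (n + 1),
      n.choose k * (ascPochhammer R k).eval x * (ascPochhammer R (n - k)).eval y := by
  rw [← Nat.sum_antidiagonal_eq_sum_range_succ
    (fun i j => (n.choose i : R) * (ascPochhammer R i).eval x * (ascPochhammer R j).eval y)]
  rw [← neg_neg (x + y), ascPochhammer_eval_neg_eq_descPochhammer, neg_add,
    ← descPochhammer_int_smeval_eq_eval, Ring.descPochhammer_smeval_add _ (Commute.all _ _),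
    mul_sum]
  refine sum_congr rfl fun ij hij => ?_
  rw [← mem_antidiagonal.mp hij, ← neg_neg x, ← neg_neg y,
    ascPochhammer_eval_neg_eq_descPochhammer, ascPochhammer_eval_neg_eq_descPochhammer,
    neg_neg, neg_neg, descPochhammer_int_smeval_eq_eval, descPochhammer_int_smeval_eq_eval,
    pow_add]
  ring

theorem ascPochhammer_add_eval {R : Type*} [CommSemiring R] (x : R) (m k : ℕ) :
    (ascPochhammer R (m + k)).eval x =
      (ascPochhammer R m).eval x * (ascPochhammer R k).eval (x + m) := by
  rw [← ascPochhammer_mul, eval_mul, eval_comp, eval_add, eval_X, eval_natCast]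

theorem ascPochhammer_eval_one_sub_sub {R : Type*} [CommRing R] (x : R) (k : ℕ) :
    (ascPochhammer R k).eval (1 - k - x) = (-1) ^ k * (ascPochhammer R k).eval x := by
  rw [show 1 - k - x = -(x + k - 1) by ring, ascPochhammer_eval_neg_eq_descPochhammer,
    descPochhammer_eval_eq_ascPochhammer]
  ring_nf

theorem Nat.cast_factorial_two_mul {K : Type*} [Field K] [CharZero K] (m : ℕ) :
    ((2 * m).factorial : K) = 4 ^ m * m.factorial * (ascPochhammer K m).eval (1 / 2) := by
  induction m with
  | zero => simp
  | succ m ih =>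
    rw [show 2 * (m + 1) = 2 * m + 1 + 1 by ring, Nat.factorial_succ, Nat.factorial_succ,
      ascPochhammer_succ_eval, Nat.factorial_succ]
    push_cast
    rw [ih]
    ring

theorem summand_eq_choose_mul_ascPochhammer (s p β : ℕ) (hβ : β ≤ p) :
    (-1 : ℚ) ^ β * 2 ^ (2 * p - 2 * β) * ((s + 2 * p - β).factorial : ℚ) /
        (((2 * p - 2 * β).factorial : ℚ) * (β.factorial : ℚ)) =
      ((s + p).factorial : ℚ) / (p.factorial * (ascPochhammer ℚ p).eval (1 / 2)) *
        (p.choose β * (ascPochhammer ℚ β).eval (1 / 2 - p : ℚ) *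
          (ascPochhammer ℚ (p - β)).eval ((s + p : ℕ) + 1 : ℚ)) := by
  obtain ⟨m, rfl⟩ := Nat.exists_eq_add_of_le' hβ
  rw [show 2 * (m + β) - 2 * β = 2 * m by omega,
    show s + 2 * (m + β) - β = s + (m + β) + m by omega, Nat.add_sub_cancel,
    ← factorial_mul_ascPochhammer, Nat.cast_factorial_two_mul,
    Nat.cast_choose ℚ (Nat.le_add_left β m), Nat.add_sub_cancel, ascPochhammer_add_eval,
    show (1 / 2 - ((m + β : ℕ) : ℚ)) = 1 - β - (1 / 2 + m) by push_cast; ring,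
    ascPochhammer_eval_one_sub_sub, pow_mul, show (2 : ℚ) ^ 2 = 4 by norm_num]
  have := ascPochhammer_pos m (1 / 2 : ℚ) (by norm_num)
  have := ascPochhammer_pos β (1 / 2 + m : ℚ) (by positivity)
  -- otherwise `field_simp` rewrites `1 / 2 + m` and no longer sees that this factor is nonzero
  generalize (ascPochhammer ℚ β).eval (1 / 2 + m : ℚ) = c at *
  field_simp

theorem stmt_5 (s p : ℕ) :
    ∑ β ∈ Finset.range (p + 1),
      ((-1 : ℚ) ^ β * 2 ^ (2 * p - 2 * β) * (Nat.factorial (s + 2 * p - β) : ℚ) /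
        ((Nat.factorial (2 * p - 2 * β) : ℚ) * (Nat.factorial β : ℚ)))
    = (Nat.factorial (s + p) : ℚ) * (ascPochhammer ℚ p).eval ((s : ℚ) + 3 / 2) /
        ((Nat.factorial p : ℚ) * (ascPochhammer ℚ p).eval (1 / 2 : ℚ)) := by
  rw [sum_congr rfl fun β hβ =>
      summand_eq_choose_mul_ascPochhammer s p β (mem_range_succ_iff.mp hβ),
    ← mul_sum, ← ascPochhammer_eval_add]
  push_cast
  ring_nf
end

section
/- For nonnegative integers $s$ and $p$, the sum $\mathcal{J}_{s,p} = \sum_{\beta=0}^{p} \frac{(-1)^\beta\, 2^{2p-2\beta}\,(s+2p-\beta)!}{(2p-2\beta)!\,\beta!}$ is strictly positive. -/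
open Finset

/-- The reindexed summand. -/
noncomputable def Tsum (s p : ℕ) : ℚ :=
  ∑ γ ∈ Finset.range (p + 1),
    ((-4 : ℚ) ^ γ * (Nat.factorial (s + p + γ) : ℚ) /
      ((Nat.factorial (2 * γ) : ℚ) * (Nat.factorial (p - γ) : ℚ)))

/-- Telescoping certificate function. -/
noncomputable def Hf (s p γ : ℕ) : ℚ :=
  -2 * (γ : ℚ) * (2 * (γ : ℚ) - 1) * ((s : ℚ) + 2 * p + 2) * (-4 : ℚ) ^ γ *
    (Nat.factorial (s + p + γ) : ℚ) /
    ((Nat.factorial (2 * γ) : ℚ) * (Nat.factorial ((p + 1) - γ) : ℚ))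

lemma fact_cast_succ (n : ℕ) :
    ((Nat.factorial (n + 1) : ℚ)) = ((n : ℚ) + 1) * (Nat.factorial n : ℚ) := by
  rw [Nat.factorial_succ]; push_cast; ring

lemma step_lemma (s p γ : ℕ) (h : γ ≤ p) :
    ((2 * (p : ℚ) + 2) * (2 * p + 1)) *
        ((-4 : ℚ) ^ γ * (Nat.factorial (s + (p + 1) + γ) : ℚ) /
          ((Nat.factorial (2 * γ) : ℚ) * (Nat.factorial ((p + 1) - γ) : ℚ)))
      + ((2 * (s : ℚ) + 2 * p + 3) * (2 * s + 2 * p + 2)) *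
        ((-4 : ℚ) ^ γ * (Nat.factorial (s + p + γ) : ℚ) /
          ((Nat.factorial (2 * γ) : ℚ) * (Nat.factorial (p - γ) : ℚ)))
      = Hf s p (γ + 1) - Hf s p γ := by
  have e1 : s + (p + 1) + γ = (s + p + γ) + 1 := by omega
  have e2 : (p + 1) - γ = (p - γ) + 1 := by omega
  have e3 : s + p + (γ + 1) = (s + p + γ) + 1 := by omega
  have e4 : 2 * (γ + 1) = (2 * γ + 1) + 1 := by omega
  have e5 : (p + 1) - (γ + 1) = p - γ := by omega
  rw [Hf, Hf, e1, e2, e3, e4, e5,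
    fact_cast_succ (s + p + γ), fact_cast_succ (p - γ),
    fact_cast_succ (2 * γ + 1), fact_cast_succ (2 * γ), pow_succ]
  have ha : ((Nat.factorial (s + p + γ) : ℚ)) ≠ 0 := by
    exact_mod_cast Nat.factorial_ne_zero _
  have hb : ((Nat.factorial (2 * γ) : ℚ)) ≠ 0 := by
    exact_mod_cast Nat.factorial_ne_zero _
  have hc : ((Nat.factorial (p - γ) : ℚ)) ≠ 0 := by
    exact_mod_cast Nat.factorial_ne_zero _
  have hpg : ((p - γ : ℕ) : ℚ) = (p : ℚ) - γ := by
    push_cast [Nat.cast_sub h]; ring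
  rw [hpg]
  have h1 : ((p : ℚ) - γ + 1) ≠ 0 := by
    have : (γ : ℚ) ≤ p := by exact_mod_cast h
    nlinarith
  push_cast
  field_simp
  ring

lemma key_rec (s p : ℕ) :
    ((2 * (p : ℚ) + 2) * (2 * p + 1)) * Tsum s (p + 1)
      = -((2 * (s : ℚ) + 2 * p + 3) * (2 * s + 2 * p + 2)) * Tsum s p := by
  have hmain :
      (((2 * (p : ℚ) + 2) * (2 * p + 1)) *
          ∑ γ ∈ Finset.range (p + 1),
            ((-4 : ℚ) ^ γ * (Nat.factorial (s + (p + 1) + γ) : ℚ) /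
              ((Nat.factorial (2 * γ) : ℚ) * (Nat.factorial ((p + 1) - γ) : ℚ))))
        + (((2 * (s : ℚ) + 2 * p + 3) * (2 * s + 2 * p + 2)) *
          ∑ γ ∈ Finset.range (p + 1),
            ((-4 : ℚ) ^ γ * (Nat.factorial (s + p + γ) : ℚ) /
              ((Nat.factorial (2 * γ) : ℚ) * (Nat.factorial (p - γ) : ℚ))))
        = Hf s p (p + 1) - Hf s p 0 := by
    rw [Finset.mul_sum, Finset.mul_sum, ← Finset.sum_add_distrib,
      ← Finset.sum_range_sub (Hf s p)]
    apply Finset.sum_congr rfl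
    intro γ hγ
    have hγp : γ ≤ p := by
      have := Finset.mem_range.mp hγ; omega
    exact step_lemma s p γ hγp
  have h0 : Hf s p 0 = 0 := by
    simp [Hf]
  have hlast :
      Hf s p (p + 1)
        + ((2 * (p : ℚ) + 2) * (2 * p + 1)) *
          ((-4 : ℚ) ^ (p + 1) * (Nat.factorial (s + (p + 1) + (p + 1)) : ℚ) /
            ((Nat.factorial (2 * (p + 1)) : ℚ) *
              (Nat.factorial ((p + 1) - (p + 1)) : ℚ))) = 0 := by
    rw [Hf]
    have e1 : (p + 1) - (p + 1) = 0 := by omega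
    have e2 : s + (p + 1) + (p + 1) = (s + 2 * p + 1) + 1 := by omega
    have e3 : s + p + (p + 1) = s + 2 * p + 1 := by omega
    rw [e1, e2, e3, fact_cast_succ (s + 2 * p + 1)]
    have ha : ((Nat.factorial (s + 2 * p + 1) : ℚ)) ≠ 0 := by
      exact_mod_cast Nat.factorial_ne_zero _
    have hb : ((Nat.factorial (2 * (p + 1)) : ℚ)) ≠ 0 := by
      exact_mod_cast Nat.factorial_ne_zero _
    simp only [Nat.factorial_zero, Nat.cast_one, mul_one]
    push_cast
    field_simp
    ring
  have hsum :
      Tsum s (p + 1)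
        = (∑ γ ∈ Finset.range (p + 1),
            ((-4 : ℚ) ^ γ * (Nat.factorial (s + (p + 1) + γ) : ℚ) /
              ((Nat.factorial (2 * γ) : ℚ) * (Nat.factorial ((p + 1) - γ) : ℚ))))
          + ((-4 : ℚ) ^ (p + 1) * (Nat.factorial (s + (p + 1) + (p + 1)) : ℚ) /
            ((Nat.factorial (2 * (p + 1)) : ℚ) *
              (Nat.factorial ((p + 1) - (p + 1)) : ℚ))) := by
    rw [Tsum, Finset.sum_range_succ]
  rw [hsum, Tsum]
  rw [h0, sub_zero] at hmain
  linear_combination hmain + hlast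

lemma Tsum_closed (s p : ℕ) :
    Tsum s p = (-1 : ℚ) ^ p * (Nat.factorial s : ℚ) *
      (Nat.factorial (2 * s + 2 * p + 1) : ℚ) /
      ((Nat.factorial (2 * s + 1) : ℚ) * (Nat.factorial (2 * p) : ℚ)) := by
  induction p with
  | zero =>
      rw [Tsum, Finset.sum_range_one]
      have e1 : 2 * s + 2 * 0 + 1 = 2 * s + 1 := by omega
      have e2 : s + 0 + 0 = s := by omega
      rw [e1, e2]
      have h1 : ((Nat.factorial (2 * s + 1) : ℚ)) ≠ 0 := by
        exact_mod_cast Nat.factorial_ne_zero _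
      norm_num [Nat.factorial_zero]
      rw [mul_div_assoc, div_self h1, mul_one]
  | succ p ih =>
      have hrec := key_rec s p
      rw [ih] at hrec
      have hA : ((2 * (p : ℚ) + 2) * (2 * p + 1)) ≠ 0 := by
        positivity
      have hT : Tsum s (p + 1)
          = -((2 * (s : ℚ) + 2 * p + 3) * (2 * s + 2 * p + 2)) *
              ((-1 : ℚ) ^ p * (Nat.factorial s : ℚ) *
                (Nat.factorial (2 * s + 2 * p + 1) : ℚ) /
                ((Nat.factorial (2 * s + 1) : ℚ) * (Nat.factorial (2 * p) : ℚ)))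
            / ((2 * (p : ℚ) + 2) * (2 * p + 1)) := by
        rw [eq_div_iff hA]
        linear_combination hrec
      rw [hT]
      have e1 : 2 * s + 2 * (p + 1) + 1 = ((2 * s + 2 * p + 1) + 1) + 1 := by omega
      have e2 : 2 * (p + 1) = (2 * p + 1) + 1 := by omega
      rw [e1, e2, fact_cast_succ ((2 * s + 2 * p + 1) + 1),
        fact_cast_succ (2 * s + 2 * p + 1),
        fact_cast_succ (2 * p + 1), fact_cast_succ (2 * p), pow_succ]
      have ha : ((Nat.factorial (2 * s + 2 * p + 1) : ℚ)) ≠ 0 := by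
        exact_mod_cast Nat.factorial_ne_zero _
      have hb : ((Nat.factorial (2 * s + 1) : ℚ)) ≠ 0 := by
        exact_mod_cast Nat.factorial_ne_zero _
      have hc : ((Nat.factorial (2 * p) : ℚ)) ≠ 0 := by
        exact_mod_cast Nat.factorial_ne_zero _
      push_cast
      field_simp
      ring

theorem stmt_6 (s p : ℕ) :
    0 < ∑ β ∈ Finset.range (p + 1),
      ((-1 : ℚ) ^ β * 2 ^ (2 * p - 2 * β) * (Nat.factorial (s + 2 * p - β) : ℚ) /
        ((Nat.factorial (2 * p - 2 * β) : ℚ) * (Nat.factorial β : ℚ))) := by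
  have hre :
      (∑ β ∈ Finset.range (p + 1),
        ((-1 : ℚ) ^ β * 2 ^ (2 * p - 2 * β) * (Nat.factorial (s + 2 * p - β) : ℚ) /
          ((Nat.factorial (2 * p - 2 * β) : ℚ) * (Nat.factorial β : ℚ))))
      = (-1 : ℚ) ^ p * Tsum s p := by
    rw [Tsum, Finset.mul_sum,
      ← Finset.sum_range_reflect (fun β =>
        ((-1 : ℚ) ^ β * 2 ^ (2 * p - 2 * β) * (Nat.factorial (s + 2 * p - β) : ℚ) /
          ((Nat.factorial (2 * p - 2 * β) : ℚ) * (Nat.factorial β : ℚ)))) (p + 1)]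
    apply Finset.sum_congr rfl
    intro γ hγ
    have hγp : γ ≤ p := by
      have := Finset.mem_range.mp hγ; omega
    have e0 : p + 1 - 1 - γ = p - γ := by omega
    have e1 : 2 * p - 2 * (p - γ) = 2 * γ := by omega
    have e2 : s + 2 * p - (p - γ) = s + p + γ := by omega
    rw [e0, e1, e2]
    have hsign : ((-1 : ℚ)) ^ (p - γ) = (-1 : ℚ) ^ p * (-1 : ℚ) ^ γ := by
      have e : p + γ = (p - γ) + 2 * γ := by omega
      have h' : ((-1 : ℚ)) ^ (p + γ) = ((-1 : ℚ)) ^ (p - γ) := by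
        rw [e, pow_add, pow_mul]; norm_num
      rw [← h', pow_add]
    rw [hsign]
    have hpow : ((2 : ℚ)) ^ (2 * γ) = 4 ^ γ := by
      rw [pow_mul]; norm_num
    rw [hpow]
    have h4 : ((-4 : ℚ)) ^ γ = (-1 : ℚ) ^ γ * 4 ^ γ := by
      rw [← neg_one_mul, mul_pow]
    rw [h4]
    ring
  rw [hre, Tsum_closed]
  have hone : ((-1 : ℚ)) ^ p * (-1 : ℚ) ^ p = 1 := by
    rw [← pow_add]
    have e : p + p = 2 * p := by omega
    rw [e, pow_mul]; norm_num
  have hcancel : (-1 : ℚ) ^ p *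
      ((-1 : ℚ) ^ p * (Nat.factorial s : ℚ) *
        (Nat.factorial (2 * s + 2 * p + 1) : ℚ) /
        ((Nat.factorial (2 * s + 1) : ℚ) * (Nat.factorial (2 * p) : ℚ)))
      = (Nat.factorial s : ℚ) * (Nat.factorial (2 * s + 2 * p + 1) : ℚ) /
        ((Nat.factorial (2 * s + 1) : ℚ) * (Nat.factorial (2 * p) : ℚ)) := by
    calc (-1 : ℚ) ^ p *
        ((-1 : ℚ) ^ p * (Nat.factorial s : ℚ) *
          (Nat.factorial (2 * s + 2 * p + 1) : ℚ) /
          ((Nat.factorial (2 * s + 1) : ℚ) * (Nat.factorial (2 * p) : ℚ)))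
        = ((-1 : ℚ) ^ p * (-1 : ℚ) ^ p) *
          ((Nat.factorial s : ℚ) * (Nat.factorial (2 * s + 2 * p + 1) : ℚ) /
            ((Nat.factorial (2 * s + 1) : ℚ) * (Nat.factorial (2 * p) : ℚ))) := by
          ring
      _ = (Nat.factorial s : ℚ) * (Nat.factorial (2 * s + 2 * p + 1) : ℚ) /
            ((Nat.factorial (2 * s + 1) : ℚ) * (Nat.factorial (2 * p) : ℚ)) := by
          rw [hone, one_mul]
  rw [hcancel]
  have h1 : (0 : ℚ) < (Nat.factorial s : ℚ) := by
    exact_mod_cast Nat.factorial_pos _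
  have h2 : (0 : ℚ) < (Nat.factorial (2 * s + 2 * p + 1) : ℚ) := by
    exact_mod_cast Nat.factorial_pos _
  have h3 : (0 : ℚ) < (Nat.factorial (2 * s + 1) : ℚ) := by
    exact_mod_cast Nat.factorial_pos _
  have h4 : (0 : ℚ) < (Nat.factorial (2 * p) : ℚ) := by
    exact_mod_cast Nat.factorial_pos _
  positivity
end

section
/- Let $r, e \ge 1$ and let $p, p'$ be integers with $0 \le 2p \le re$, $p' \ge p$, $p' - p \le e$, and $p' + p \le re$. Then the constant $\mathcal{N}^{II}_{r,e,p',p} = \frac{(-1)^{p'-p}(2p)!\,(2p')!\,(re-2p)!\,e!}{(p'-p)!\,(e-p'+p)!\,(re-p'-p)!\,((r+1)e-2p')!} \cdot \mathcal{J}_{s,p}$, where $s = (r+1)e - p' - p$ and $\mathcal{J}_{s,p} = \sum_{\beta=0}^{p}\frac{(-1)^\beta 2^{2p-2\beta}(s+2p-\beta)!}{(2p-2\beta)!\beta!}$, is nonzero. -/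
/-!
The prefactor is a signed quotient of factorials, so everything rests on `𝒥_{s,p} > 0`.
Splitting off the top factor of `(s + 2p + 3 - β)!` in the summand yields the recurrence
`𝒥_{s+1,p+1} = (s + 2p + 3) 𝒥_{s,p+1} + 𝒥_{s+1,p}`, so positivity propagates from the boundary
values `𝒥_{s,0} = s!` and `𝒥_{0,p} = 2p + 1`. The latter is the value `U_{2p}(1) = 2p + 1` of the
Chebyshev polynomial of the second kind, in the form `∑_{i+j=n} (-1)^j 2^(i-j) C(i,j) = n + 1`.
-/

open Finset Nat

theorem sum_antidiagonal_choose_mul_pow_add_two {R : Type*} [CommSemiring R] (x y : R) (n : ℕ) :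
    ∑ ij ∈ antidiagonal (n + 2), (ij.1.choose ij.2 : R) * x ^ ij.1 * y ^ ij.2 =
      x * ∑ ij ∈ antidiagonal (n + 1), (ij.1.choose ij.2 : R) * x ^ ij.1 * y ^ ij.2 +
        x * y * ∑ ij ∈ antidiagonal n, (ij.1.choose ij.2 : R) * x ^ ij.1 * y ^ ij.2 := by
  rw [Nat.sum_antidiagonal_succ, Nat.sum_antidiagonal_succ', Nat.sum_antidiagonal_succ']
  simp only [choose_succ_succ, cast_add, add_mul, mul_add, sum_add_distrib, mul_sum,
    choose_zero_succ, cast_zero, zero_mul, zero_add, choose_zero_right, Nat.succ_eq_add_one]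
  ring_nf

theorem sum_antidiagonal_choose_mul_two_pow_mul_neg_half_pow (n : ℕ) :
    ∑ ij ∈ antidiagonal n, (ij.1.choose ij.2 : ℚ) * 2 ^ ij.1 * (-1 / 2) ^ ij.2 = n + 1 := by
  induction n using Nat.twoStepInduction with
  | zero => simp
  | one => simp [Nat.sum_antidiagonal_succ]; norm_num
  | more n ih₀ ih₁ =>
    rw [sum_antidiagonal_choose_mul_pow_add_two, ih₀, ih₁]
    push_cast
    ring

def jTerm (s p β : ℕ) : ℚ :=
  (-1) ^ β * 2 ^ (2 * p - 2 * β) * ((s + 2 * p - β)! : ℚ) / (((2 * p - 2 * β)! : ℚ) * (β ! : ℚ))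

def J (s p : ℕ) : ℚ := ∑ β ∈ range (p + 1), jTerm s p β

theorem J_zero_right (s : ℕ) : J s 0 = s ! := by
  simp [J, jTerm]

theorem jTerm_zero_left (p k : ℕ) (hk : k ≤ p) :
    jTerm 0 p k = ((2 * p - k).choose k : ℚ) * 2 ^ (2 * p - k) * (-1 / 2) ^ k := by
  have hk' : 2 * p - k = (2 * p - 2 * k) + k := by omega
  rw [jTerm, cast_choose ℚ (by omega), show 2 * p - k - k = 2 * p - 2 * k by omega, zero_add,
    hk', pow_add]
  field_simp
  rw [← mul_pow]
  norm_num

theorem J_zero_left (p : ℕ) : J 0 p = 2 * p + 1 := by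
  have h := sum_antidiagonal_choose_mul_two_pow_mul_neg_half_pow (2 * p)
  rw [← Nat.sum_antidiagonal_swap] at h
  simp only [Prod.fst_swap, Prod.snd_swap] at h
  rw [Nat.sum_antidiagonal_eq_sum_range_succ
    (fun j i => (i.choose j : ℚ) * 2 ^ i * (-1 / 2) ^ j)] at h
  push_cast at h
  rw [← h, ← sum_subset (range_subset_range.mpr (by omega : p + 1 ≤ 2 * p + 1))]
  · exact sum_congr rfl fun k hk => jTerm_zero_left p k (by simpa [Nat.lt_succ_iff] using hk)
  · intro k _ hk
    simp only [mem_range, not_lt] at hk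
    rw [choose_eq_zero_of_lt (by omega), cast_zero, zero_mul, zero_mul]

theorem jTerm_succ_succ (s p β : ℕ) (hβ : β ≤ p + 1) :
    jTerm (s + 1) (p + 1) β = ((s : ℚ) + 2 * p + 3 - β) * jTerm s (p + 1) β := by
  rw [jTerm, jTerm, show s + 1 + 2 * (p + 1) - β = (s + 2 * (p + 1) - β) + 1 by omega,
    factorial_succ, cast_mul, cast_add_one, cast_sub (by omega)]
  push_cast
  ring

theorem succ_mul_jTerm_succ (s p γ : ℕ) :
    ((γ : ℚ) + 1) * jTerm s (p + 1) (γ + 1) = -jTerm (s + 1) p γ := by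
  rw [jTerm, jTerm, show 2 * (p + 1) - 2 * (γ + 1) = 2 * p - 2 * γ by omega,
    show s + 2 * (p + 1) - (γ + 1) = s + 1 + 2 * p - γ by omega, factorial_succ γ]
  push_cast
  field_simp
  ring

theorem J_succ_succ (s p : ℕ) :
    J (s + 1) (p + 1) = ((s : ℚ) + 2 * p + 3) * J s (p + 1) + J (s + 1) p := by
  have hweighted : ∑ β ∈ range (p + 2), (β : ℚ) * jTerm s (p + 1) β = -J (s + 1) p := by
    rw [sum_range_succ']
    simp only [cast_add_one, succ_mul_jTerm_succ, sum_neg_distrib, cast_zero, zero_mul, add_zero, J]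
  calc J (s + 1) (p + 1)
      = ∑ β ∈ range (p + 2), (((s : ℚ) + 2 * p + 3) * jTerm s (p + 1) β
          - (β : ℚ) * jTerm s (p + 1) β) :=
        sum_congr rfl fun β hβ => by
          rw [jTerm_succ_succ s p β (by simpa [Nat.lt_succ_iff] using hβ)]; ring
    _ = ((s : ℚ) + 2 * p + 3) * J s (p + 1) + J (s + 1) p := by
        rw [sum_sub_distrib, ← mul_sum, hweighted, sub_neg_eq_add]; rfl

theorem J_pos (s p : ℕ) : 0 < J s p := by
  induction p generalizing s with
  | zero => rw [J_zero_right]; positivity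
  | succ p ih =>
    induction s with
    | zero => rw [J_zero_left]; positivity
    | succ s ihs =>
      rw [J_succ_succ]
      exact add_pos (mul_pos (by positivity) ihs) (ih _)

theorem stmt_8_general (r e p p' : ℕ) :
    ((-1 : ℚ) ^ (p' - p) * (Nat.factorial (2 * p) : ℚ) * (Nat.factorial (2 * p') : ℚ) *
        (Nat.factorial (r * e - 2 * p) : ℚ) * (Nat.factorial e : ℚ) /
      ((Nat.factorial (p' - p) : ℚ) * (Nat.factorial (e - (p' - p)) : ℚ) *
        (Nat.factorial (r * e - p' - p) : ℚ) * (Nat.factorial ((r + 1) * e - 2 * p') : ℚ))) *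
      (∑ β ∈ Finset.range (p + 1),
        ((-1 : ℚ) ^ β * 2 ^ (2 * p - 2 * β) *
          (Nat.factorial ((r + 1) * e - p' - p + 2 * p - β) : ℚ) /
          ((Nat.factorial (2 * p - 2 * β) : ℚ) * (Nat.factorial β : ℚ)))) ≠ 0 :=
  mul_ne_zero (by positivity) (J_pos ((r + 1) * e - p' - p) p).ne'

theorem stmt_8 (r e p p' : ℕ) (hr : 1 ≤ r) (he : 1 ≤ e)
    (hp : 2 * p ≤ r * e) (hpp' : p ≤ p') (hp'e : p' - p ≤ e) (hsum : p' + p ≤ r * e) :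
    ((-1 : ℚ) ^ (p' - p) * (Nat.factorial (2 * p) : ℚ) * (Nat.factorial (2 * p') : ℚ) *
        (Nat.factorial (r * e - 2 * p) : ℚ) * (Nat.factorial e : ℚ) /
      ((Nat.factorial (p' - p) : ℚ) * (Nat.factorial (e - (p' - p)) : ℚ) *
        (Nat.factorial (r * e - p' - p) : ℚ) * (Nat.factorial ((r + 1) * e - 2 * p') : ℚ))) *
      (∑ β ∈ Finset.range (p + 1),
        ((-1 : ℚ) ^ β * 2 ^ (2 * p - 2 * β) *
          (Nat.factorial ((r + 1) * e - p' - p + 2 * p - β) : ℚ) /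
          ((Nat.factorial (2 * p - 2 * β) : ℚ) * (Nat.factorial β : ℚ)))) ≠ 0 :=
  stmt_8_general r e p p'
end

section
/- For nonnegative integers $s, p$ with $s \ge 1$, the integer $\mathcal{J}_{s,p} = \sum_{\beta=0}^{p}\frac{(-1)^\beta 2^{2p-2\beta}(s+2p-\beta)!}{(2p-2\beta)!\,\beta!}$ satisfies the hypergeometric evaluation $\mathcal{J}_{s,p}\cdot p!\cdot\prod_{k=0}^{p-1}(2k+1) = (s+p)!\cdot\prod_{k=0}^{p-1}(2s+2k+3)$. -/
open Finset

private def tt (s p b : ℕ) : ℚ :=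
  (-1 : ℚ) ^ b * 2 ^ (2 * p - 2 * b) * (Nat.factorial (s + 2 * p - b) : ℚ) /
    ((Nat.factorial (2 * p - 2 * b) : ℚ) * (Nat.factorial b : ℚ))

private def GG (s p b : ℕ) : ℚ :=
  (-1 : ℚ) ^ b * 2 ^ (2 * (p + 1 - b)) * (Nat.factorial (s + 2 * p + 1 - b) : ℚ) /
    ((Nat.factorial (2 * p + 2 - 2 * b) : ℚ) * (Nat.factorial b : ℚ)) * (b : ℚ) *
    (2 * ((s : ℚ) + 2 * p + 2) * b - ((p : ℚ) + 1) * (6 * p + 5) - (s : ℚ) * (4 * p + 3))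

private lemma fac_cast_succ (n : ℕ) :
    (Nat.factorial (n + 1) : ℚ) = ((n : ℚ) + 1) * (Nat.factorial n : ℚ) := by
  rw [Nat.factorial_succ]; push_cast; ring

private lemma term_wz (s p b : ℕ) (hb : b ≤ p) :
    ((p : ℚ) + 1) * (2 * p + 1) * tt s (p + 1) b
      - ((s : ℚ) + p + 1) * (2 * s + 2 * p + 3) * tt s p b
    = GG s p (b + 1) - GG s p b := by
  obtain ⟨j, rfl⟩ : ∃ j, p = b + j := ⟨p - b, by omega⟩
  have e1 : 2 * (b + j) - 2 * b = 2 * j := by omega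
  have e2 : s + 2 * (b + j) - b = s + b + 2 * j := by omega
  have e3 : 2 * (b + j + 1) - 2 * b = 2 * j + 2 := by omega
  have e4 : s + 2 * (b + j + 1) - b = s + b + 2 * j + 2 := by omega
  have e5 : b + j + 1 - b = j + 1 := by omega
  have e6 : s + 2 * (b + j) + 1 - b = s + b + 2 * j + 1 := by omega
  have e7 : 2 * (b + j) + 2 - 2 * b = 2 * j + 2 := by omega
  have e8 : b + j + 1 - (b + 1) = j := by omega
  have e9 : s + 2 * (b + j) + 1 - (b + 1) = s + b + 2 * j := by omega
  have e10 : 2 * (b + j) + 2 - 2 * (b + 1) = 2 * j := by omega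
  simp only [tt, GG, e1, e2, e3, e4, e5, e6, e7, e8, e9, e10]
  have hA2 : (Nat.factorial (s + b + 2 * j + 2) : ℚ)
      = ((s : ℚ) + b + 2 * j + 2) * ((s : ℚ) + b + 2 * j + 1)
        * (Nat.factorial (s + b + 2 * j) : ℚ) := by
    rw [show s + b + 2 * j + 2 = (s + b + 2 * j + 1) + 1 from rfl, fac_cast_succ, fac_cast_succ]
    push_cast; ring
  have hA1 : (Nat.factorial (s + b + 2 * j + 1) : ℚ)
      = ((s : ℚ) + b + 2 * j + 1) * (Nat.factorial (s + b + 2 * j) : ℚ) := by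
    rw [fac_cast_succ]; push_cast; ring
  have hB2 : (Nat.factorial (2 * j + 2) : ℚ)
      = (2 * (j : ℚ) + 2) * (2 * (j : ℚ) + 1) * (Nat.factorial (2 * j) : ℚ) := by
    rw [show 2 * j + 2 = (2 * j + 1) + 1 from rfl, fac_cast_succ, fac_cast_succ]
    push_cast; ring
  have hC1 : (Nat.factorial (b + 1) : ℚ) = ((b : ℚ) + 1) * (Nat.factorial b : ℚ) := by
    rw [fac_cast_succ]
  have h2j1 : 2 * (j + 1) = 2 * j + 2 := by ring
  rw [hA2, hA1, hB2, hC1, h2j1]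
  have hA : (Nat.factorial (s + b + 2 * j) : ℚ) ≠ 0 :=
    Nat.cast_ne_zero.mpr (Nat.factorial_ne_zero _)
  have hB : (Nat.factorial (2 * j) : ℚ) ≠ 0 :=
    Nat.cast_ne_zero.mpr (Nat.factorial_ne_zero _)
  have hC : (Nat.factorial b : ℚ) ≠ 0 :=
    Nat.cast_ne_zero.mpr (Nat.factorial_ne_zero _)
  have hj1 : (2 * (j : ℚ) + 1) ≠ 0 := by positivity
  have hj2 : (2 * (j : ℚ) + 2) ≠ 0 := by positivity
  have hb1 : ((b : ℚ) + 1) ≠ 0 := by positivity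
  have hpow : (2 : ℚ) ^ (2 * j + 2) = 4 * 2 ^ (2 * j) := by
    rw [pow_add]; ring
  have hsgn : (-1 : ℚ) ^ (b + 1) = -(-1 : ℚ) ^ b := by
    rw [pow_succ]; ring
  rw [hpow, hsgn]
  push_cast
  field_simp
  ring

private lemma boundary (s p : ℕ) :
    GG s p (p + 1) + ((p : ℚ) + 1) * (2 * p + 1) * tt s (p + 1) (p + 1) = 0 := by
  have e1 : p + 1 - (p + 1) = 0 := by omega
  have e2 : s + 2 * p + 1 - (p + 1) = s + p := by omega
  have e3 : 2 * p + 2 - 2 * (p + 1) = 0 := by omega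
  have e4 : 2 * (p + 1) - 2 * (p + 1) = 0 := by omega
  have e5 : s + 2 * (p + 1) - (p + 1) = s + p + 1 := by omega
  simp only [GG, tt, e1, e2, e3, e4, e5]
  have hA1 : (Nat.factorial (s + p + 1) : ℚ)
      = ((s : ℚ) + p + 1) * (Nat.factorial (s + p) : ℚ) := by
    rw [fac_cast_succ]; push_cast; ring
  have hC1 : (Nat.factorial (p + 1) : ℚ) = ((p : ℚ) + 1) * (Nat.factorial p : ℚ) := by
    rw [fac_cast_succ]
  rw [hA1, hC1]
  have hC : (Nat.factorial p : ℚ) ≠ 0 := Nat.cast_ne_zero.mpr (Nat.factorial_ne_zero _)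
  have hp1 : ((p : ℚ) + 1) ≠ 0 := by positivity
  simp only [Nat.factorial_zero, Nat.cast_one, mul_zero, pow_zero]
  push_cast
  field_simp
  ring

private lemma recurrence (s p : ℕ) :
    ((p : ℚ) + 1) * (2 * p + 1) * (∑ b ∈ Finset.range (p + 2), tt s (p + 1) b)
      = ((s : ℚ) + p + 1) * (2 * s + 2 * p + 3) * (∑ b ∈ Finset.range (p + 1), tt s p b) := by
  rw [Finset.sum_range_succ, mul_add, Finset.mul_sum, Finset.mul_sum]
  have h1 : ∀ b ∈ Finset.range (p + 1),
      ((p : ℚ) + 1) * (2 * p + 1) * tt s (p + 1) b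
        = ((s : ℚ) + p + 1) * (2 * s + 2 * p + 3) * tt s p b + (GG s p (b + 1) - GG s p b) := by
    intro b hb
    have := term_wz s p b (by simpa using Nat.lt_succ_iff.mp (Finset.mem_range.mp hb))
    linarith
  rw [Finset.sum_congr rfl h1, Finset.sum_add_distrib, Finset.sum_range_sub (GG s p)]
  have hG0 : GG s p 0 = 0 := by simp [GG]
  have hbd := boundary s p
  rw [hG0]
  linarith

theorem stmt_9 (s p : ℕ) (hs : 1 ≤ s) :
    (∑ β ∈ Finset.range (p + 1),
      ((-1 : ℚ) ^ β * 2 ^ (2 * p - 2 * β) * (Nat.factorial (s + 2 * p - β) : ℚ) /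
        ((Nat.factorial (2 * p - 2 * β) : ℚ) * (Nat.factorial β : ℚ)))) *
      (Nat.factorial p : ℚ) * (∏ k ∈ Finset.range p, ((2 * k + 1 : ℕ) : ℚ))
    = (Nat.factorial (s + p) : ℚ) * (∏ k ∈ Finset.range p, ((2 * s + 2 * k + 3 : ℕ) : ℚ)) := by
  induction p with
  | zero => simp [Nat.factorial]
  | succ p ih =>
    have hrec := recurrence s p
    have hS : (∑ β ∈ Finset.range (p + 1),
        ((-1 : ℚ) ^ β * 2 ^ (2 * p - 2 * β) * (Nat.factorial (s + 2 * p - β) : ℚ) /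
          ((Nat.factorial (2 * p - 2 * β) : ℚ) * (Nat.factorial β : ℚ))))
        = ∑ b ∈ Finset.range (p + 1), tt s p b := rfl
    have hS1 : (∑ β ∈ Finset.range (p + 1 + 1),
        ((-1 : ℚ) ^ β * 2 ^ (2 * (p + 1) - 2 * β) * (Nat.factorial (s + 2 * (p + 1) - β) : ℚ) /
          ((Nat.factorial (2 * (p + 1) - 2 * β) : ℚ) * (Nat.factorial β : ℚ))))
        = ∑ b ∈ Finset.range (p + 2), tt s (p + 1) b := rfl
    rw [hS] at ih
    rw [hS1, Finset.prod_range_succ, Finset.prod_range_succ,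
      show s + (p + 1) = (s + p) + 1 from rfl, fac_cast_succ, fac_cast_succ]
    push_cast
    push_cast at ih
    linear_combination ((Nat.factorial p : ℚ) * ∏ k ∈ Finset.range p, (2 * (k : ℚ) + 1)) * hrec
      + ((s : ℚ) + p + 1) * (2 * s + 2 * p + 3) * ih
end

section
/- Let $V$ be a 2-dimensional complex vector space and let $Q$ be a nondegenerate quadratic form on $V^*$ (a binary quadratic with nonzero discriminant $\Delta$). Then for $e \ge 1$ and $0 \le p \le e$, the $2p$-th transvectant satisfies $(Q^e, Q^e)_{2p} = \mathcal{N}^{I}_{e,p}\, Q^{2e-2p}\,(-\Delta)^p$ where $\mathcal{N}^{I}_{e,p} = \sum_{i=\max(0,2p-e)}^{\min(2p,e)}(-1)^{p+i}\binom{2p}{i}\frac{(e!)^4}{((e-2p+i)!)^2((e-i)!)^2}$ does not depend on $Q$. -/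
open Finset MvPolynomial

/-- Cayley's Omega operator `∂x₀∂y₁ - ∂y₀∂x₁` on polynomials in the four
variables `x₀ = X 0, x₁ = X 1, y₀ = X 2, y₁ = X 3`. -/
noncomputable def Omega : Module.End ℂ (MvPolynomial (Fin 4) ℂ) :=
  (MvPolynomial.pderiv (0 : Fin 4)).toLinearMap * (MvPolynomial.pderiv (3 : Fin 4)).toLinearMap -
    (MvPolynomial.pderiv (2 : Fin 4)).toLinearMap * (MvPolynomial.pderiv (1 : Fin 4)).toLinearMap

/-! ### Auxiliary definitions: linear forms and products of their powers -/

noncomputable def Lx (u v : ℂ) : MvPolynomial (Fin 4) ℂ := C u * X 0 + C v * X 1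
noncomputable def Ly (u v : ℂ) : MvPolynomial (Fin 4) ℂ := C u * X 2 + C v * X 3

noncomputable def Sp (α β γ δ : ℂ) (m n r s : ℕ) : MvPolynomial (Fin 4) ℂ :=
  ((Lx α β)^m * (Lx γ δ)^n) * ((Ly α β)^r * (Ly γ δ)^s)

lemma pd_Lx (u v : ℂ) : pderiv (0 : Fin 4) (Lx u v) = C u ∧ pderiv (1 : Fin 4) (Lx u v) = C v
    ∧ pderiv (2 : Fin 4) (Lx u v) = 0 ∧ pderiv (3 : Fin 4) (Lx u v) = 0 := by
  refine ⟨?_, ?_, ?_, ?_⟩ <;> simp [Lx, pderiv_X, Pi.single_apply]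

lemma pd_Ly (u v : ℂ) : pderiv (2 : Fin 4) (Ly u v) = C u ∧ pderiv (3 : Fin 4) (Ly u v) = C v
    ∧ pderiv (0 : Fin 4) (Ly u v) = 0 ∧ pderiv (1 : Fin 4) (Ly u v) = 0 := by
  refine ⟨?_, ?_, ?_, ?_⟩ <;> simp [Ly, pderiv_X, Pi.single_apply]

lemma pd_prod_pow (j : Fin 4) (f g : MvPolynomial (Fin 4) ℂ) (cf cg : ℂ)
    (hf : pderiv j f = C cf) (hg : pderiv j g = C cg) (m n : ℕ) :
    pderiv j (f ^ m * g ^ n) =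
      C ((m : ℂ) * cf) * (f ^ (m - 1) * g ^ n) + C ((n : ℂ) * cg) * (f ^ m * g ^ (n - 1)) := by
  rw [pderiv_mul, Derivation.leibniz_pow, Derivation.leibniz_pow, hf, hg]
  simp only [smul_eq_mul, nsmul_eq_mul, map_mul, ← map_natCast (C : ℂ →+* MvPolynomial (Fin 4) ℂ)]
  ring

lemma pd_prod_pow_zero (j : Fin 4) (f g : MvPolynomial (Fin 4) ℂ)
    (hf : pderiv j f = 0) (hg : pderiv j g = 0) (m n : ℕ) :
    pderiv j (f ^ m * g ^ n) = 0 := by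
  rw [pderiv_mul, Derivation.leibniz_pow, Derivation.leibniz_pow, hf, hg]
  simp

lemma Omega_apply (f : MvPolynomial (Fin 4) ℂ) :
    Omega f = pderiv 0 (pderiv 3 f) - pderiv 2 (pderiv 1 f) := rfl

/-- The key computation: `Omega` acts on products of powers of linear forms like
the Omega operator on monomials, with an extra determinant factor. -/
lemma Omega_Sp (α β γ δ : ℂ) (m n r s : ℕ) :
    Omega (Sp α β γ δ m n r s) = C (α * δ - β * γ) *
      (C ((m : ℂ) * (s : ℂ)) * Sp α β γ δ (m - 1) n r (s - 1) -
       C ((n : ℂ) * (r : ℂ)) * Sp α β γ δ m (n - 1) (r - 1) s) := by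
  obtain ⟨hA0, hA1, hA2, hA3⟩ := pd_Lx α β
  obtain ⟨hB0, hB1, hB2, hB3⟩ := pd_Lx γ δ
  obtain ⟨hA'2, hA'3, hA'0, hA'1⟩ := pd_Ly α β
  obtain ⟨hB'2, hB'3, hB'0, hB'1⟩ := pd_Ly γ δ
  rw [Omega_apply, Sp]
  rw [pderiv_mul (i := 3), pd_prod_pow_zero 3 _ _ hA3 hB3,
      pd_prod_pow 3 _ _ β δ hA'3 hB'3]
  rw [pderiv_mul (i := 1), pd_prod_pow_zero 1 _ _ hA'1 hB'1,
      pd_prod_pow 1 _ _ β δ hA1 hB1]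
  simp only [zero_mul, zero_add, mul_zero, add_zero]
  rw [pderiv_mul (i := 0), pd_prod_pow 0 _ _ α γ hA0 hB0]
  rw [pderiv_mul (i := 2), pd_prod_pow 2 _ _ α γ hA'2 hB'2]
  rw [show (pderiv (0 : Fin 4)) (C ((r:ℂ) * β) * ((Ly α β) ^ (r-1) * (Ly γ δ) ^ s) +
        C ((s:ℂ) * δ) * ((Ly α β) ^ r * (Ly γ δ) ^ (s-1))) = 0 by
    simp only [map_add, pderiv_C_mul, pd_prod_pow_zero 0 _ _ hA'0 hB'0]; simp]
  rw [show (pderiv (2 : Fin 4)) (C ((m:ℂ) * β) * ((Lx α β) ^ (m-1) * (Lx γ δ) ^ n) +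
        C ((n:ℂ) * δ) * ((Lx α β) ^ m * (Lx γ δ) ^ (n-1))) = 0 by
    simp only [map_add, pderiv_C_mul, pd_prod_pow_zero 2 _ _ hA2 hB2]; simp]
  simp only [map_mul, map_sub, Sp]
  ring

/-! ### Coefficients -/

noncomputable def co (e k i : ℕ) : ℂ :=
  (-1 : ℂ)^i * (k.choose i : ℂ) * ((e.descFactorial (k-i) * e.descFactorial i : ℕ) : ℂ)^2

noncomputable def co1 (e k i : ℕ) : ℂ :=
  (-1 : ℂ)^i * (k.choose i : ℂ) * ((e.descFactorial (k+1-i) * e.descFactorial i : ℕ) : ℂ)^2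

noncomputable def co2 (e k i : ℕ) : ℂ :=
  (-1 : ℂ)^i * (k.choose i : ℂ) * ((e.descFactorial (k-i) * e.descFactorial (i+1) : ℕ) : ℂ)^2

lemma co1_eq (e k i : ℕ) (h : i ≤ k) :
    co1 e k i = co e k i * ((e-(k-i) : ℕ) : ℂ) * ((e-(k-i) : ℕ) : ℂ) := by
  unfold co1 co
  rw [show k+1-i = (k-i)+1 by omega, Nat.descFactorial_succ]
  push_cast; ring

lemma co2_eq (e k i : ℕ) :
    co2 e k i = co e k i * ((e-i : ℕ) : ℂ) * ((e-i : ℕ) : ℂ) := by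
  unfold co2 co
  rw [Nat.descFactorial_succ]
  push_cast; ring

lemma co_pascal (e k j : ℕ) : co1 e k (j+1) - co2 e k j = co e (k+1) (j+1) := by
  unfold co1 co2 co
  rw [Nat.succ_sub_succ, Nat.choose_succ_succ]
  push_cast; ring

lemma co1_zero (e k : ℕ) : co1 e k 0 = co e (k+1) 0 := by
  unfold co1 co; simp

lemma co1_top (e k : ℕ) : co1 e k (k+1) = 0 := by
  unfold co1; simp [Nat.choose_succ_self]

lemma sum_step (e k : ℕ) (T : ℕ → MvPolynomial (Fin 4) ℂ) :
    ∑ i ∈ Finset.range (k+1), (C (co1 e k i) * T i - C (co2 e k i) * T (i+1)) =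
      ∑ i ∈ Finset.range (k+2), C (co e (k+1) i) * T i := by
  rw [Finset.sum_sub_distrib]
  have h1 : ∑ i ∈ Finset.range (k+1), C (co1 e k i) * T i
      = ∑ i ∈ Finset.range (k+2), C (co1 e k i) * T i := by
    rw [Finset.sum_range_succ _ (k+1), co1_top]; simp
  have h2 : ∑ i ∈ Finset.range (k+1), C (co2 e k i) * T (i+1)
      = ∑ i ∈ Finset.range (k+2),
          (fun j => Nat.rec (0 : MvPolynomial (Fin 4) ℂ)
            (fun i _ => C (co2 e k i) * T (i+1)) j) i := by
    rw [Finset.sum_range_succ' _ (k+1)]; simp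
  rw [h1, h2, ← Finset.sum_sub_distrib]
  refine Finset.sum_congr rfl fun i _ => ?_
  cases i with
  | zero => simp [co1_zero]
  | succ j =>
      show C (co1 e k (j+1)) * T (j+1) - C (co2 e k j) * T (j+1) = _
      rw [← sub_mul, ← map_sub, co_pascal]

lemma Omega_C_mul (x : ℂ) (f : MvPolynomial (Fin 4) ℂ) : Omega (C x * f) = C x * Omega f := by
  rw [← smul_eq_C_mul, map_smul, smul_eq_C_mul]

lemma Omega_pow_Sp (α β γ δ : ℂ) (e k : ℕ) :
    (Omega ^ k) (Sp α β γ δ e e e e) = C ((α*δ-β*γ)^k) *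
      ∑ i ∈ Finset.range (k+1),
        C (co e k i) * Sp α β γ δ (e-(k-i)) (e-i) (e-i) (e-(k-i)) := by
  induction k with
  | zero => simp [co]
  | succ k ih =>
    have hsummand : ∀ i ∈ Finset.range (k+1),
        Omega (C (co e k i) * Sp α β γ δ (e-(k-i)) (e-i) (e-i) (e-(k-i)))
          = C (α*δ-β*γ) * (C (co1 e k i) *
              Sp α β γ δ (e-(k+1-i)) (e-i) (e-i) (e-(k+1-i)) -
            C (co2 e k i) *
              Sp α β γ δ (e-(k+1-(i+1))) (e-(i+1)) (e-(i+1)) (e-(k+1-(i+1)))) := by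
      intro i hi
      rw [Finset.mem_range] at hi
      have hik : i ≤ k := by omega
      have e1 : e-(k-i)-1 = e-(k+1-i) := by omega
      have e2 : e-i-1 = e-(i+1) := by omega
      have e3 : k+1-(i+1) = k-i := by omega
      rw [Omega_C_mul, Omega_Sp, e1, e2, e3, co1_eq e k i hik, co2_eq]
      simp only [map_mul]
      ring
    rw [pow_succ', Module.End.mul_apply, ih, Omega_C_mul, map_sum,
        Finset.sum_congr rfl hsummand, ← Finset.mul_sum,
        sum_step e k (fun j => Sp α β γ δ (e-(k+1-j)) (e-j) (e-j) (e-(k+1-j)))]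
    rw [map_pow, map_pow, pow_succ']
    ring

/-! ### Factorization and evaluation lemmas -/

lemma factor_quad (a b c : ℂ) : ∃ α β γ δ : ℂ, α*γ = a ∧ α*δ + β*γ = b ∧ β*δ = c := by
  by_cases ha : a = 0
  · exact ⟨0, 1, b, c, by simp [ha], by simp, by simp⟩
  · obtain ⟨s, hs⟩ := IsAlgClosed.exists_pow_nat_eq (b^2 - 4*a*c) (n := 2) (by norm_num)
    refine ⟨a, (b+s)/2, 1, (b-s)/(2*a), by ring, by field_simp; ring, ?_⟩
    field_simp
    linear_combination -hs

lemma aeval_x_lin (u v : ℂ) :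
    aeval (![X 0, X 1] : Fin 2 → MvPolynomial (Fin 4) ℂ) (C u * X 0 + C v * X 1) = Lx u v := by
  simp [Lx, algebraMap_eq]

lemma aeval_y_lin (u v : ℂ) :
    aeval (![X 2, X 3] : Fin 2 → MvPolynomial (Fin 4) ℂ) (C u * X 0 + C v * X 1) = Ly u v := by
  simp [Ly, algebraMap_eq]

lemma aeval_diag_Lx (u v : ℂ) :
    aeval (![X 0, X 1, X 0, X 1] : Fin 4 → MvPolynomial (Fin 2) ℂ) (Lx u v)
      = C u * X 0 + C v * X 1 := by
  simp [Lx, algebraMap_eq]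

lemma aeval_diag_Ly (u v : ℂ) :
    aeval (![X 0, X 1, X 0, X 1] : Fin 4 → MvPolynomial (Fin 2) ℂ) (Ly u v)
      = C u * X 0 + C v * X 1 := by
  simp [Ly, algebraMap_eq]

lemma aeval_diag_Sp (α β γ δ : ℂ) (m n r s : ℕ) :
    aeval (![X 0, X 1, X 0, X 1] : Fin 4 → MvPolynomial (Fin 2) ℂ) (Sp α β γ δ m n r s)
      = (C α * X 0 + C β * X 1)^(m+r) * (C γ * X 0 + C δ * X 1)^(n+s) := by
  simp only [Sp, map_mul, map_pow, aeval_diag_Lx, aeval_diag_Ly, pow_add]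
  ring

lemma aeval_diag_C (x : ℂ) :
    aeval (![X 0, X 1, X 0, X 1] : Fin 4 → MvPolynomial (Fin 2) ℂ) (C x) = C x := by
  simp [algebraMap_eq]

/-! ### The scalar identity -/

lemma co_term_eq (e p i : ℕ) (h1 : 2*p - e ≤ i) (h2 : i ≤ min (2*p) e) :
    co e (2*p) i = (-1:ℂ)^p *
      (((-1 : ℚ) ^ (p + i) * ((2*p).choose i : ℚ) * (e.factorial : ℚ) ^ 4 /
        (((e + i - 2*p).factorial : ℚ) ^ 2 * ((e - i).factorial : ℚ) ^ 2) : ℚ) : ℂ) := by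
  have hie : i ≤ e := le_trans h2 (min_le_right _ _)
  have hi2p : i ≤ 2*p := le_trans h2 (min_le_left _ _)
  have hA : (e + i - 2*p).factorial * e.descFactorial (2*p - i) = e.factorial := by
    rw [show e + i - 2*p = e - (2*p - i) by omega]
    exact Nat.factorial_mul_descFactorial (by omega)
  have hB : (e - i).factorial * e.descFactorial i = e.factorial :=
    Nat.factorial_mul_descFactorial hie
  have a1 : ((e + i - 2*p).factorial : ℂ) * (e.descFactorial (2*p - i) : ℂ)
      = (e.factorial : ℂ) := by exact_mod_cast congrArg (Nat.cast : ℕ → ℂ) hA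
  have a2 : ((e - i).factorial : ℂ) * (e.descFactorial i : ℂ) = (e.factorial : ℂ) := by
    exact_mod_cast congrArg (Nat.cast : ℕ → ℂ) hB
  have hs : (-1:ℂ)^p * (-1:ℂ)^p = 1 := by
    rw [← pow_add, show p + p = 2*p by ring, pow_mul]; norm_num
  unfold co
  push_cast
  rw [pow_add]
  rw [← mul_div_assoc, eq_div_iff (by
    exact mul_ne_zero (pow_ne_zero _ (Nat.cast_ne_zero.2 (Nat.factorial_ne_zero _)))
      (pow_ne_zero _ (Nat.cast_ne_zero.2 (Nat.factorial_ne_zero _))))]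
  set Y : ℂ := (-1:ℂ)^i
  set ch : ℂ := (((2*p).choose i : ℕ) : ℂ)
  set f : ℂ := ((e.factorial : ℕ) : ℂ)
  set f1 : ℂ := (((e + i - 2*p).factorial : ℕ) : ℂ)
  set f2 : ℂ := (((e - i).factorial : ℕ) : ℂ)
  set d1 : ℂ := ((e.descFactorial (2*p - i) : ℕ) : ℂ)
  set d2 : ℂ := ((e.descFactorial i : ℕ) : ℂ)
  linear_combination (Y*ch*(f2*d2)*((f1*d1)*(f2*d2)+f^2))*a1 +
    (Y*ch*f*((f1*d1)*(f2*d2)+f^2))*a2 - (Y*ch*f^4)*hs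

lemma scalar_sum (e p : ℕ) :
    (∑ i ∈ Finset.range (2*p+1), co e (2*p) i) = (-1:ℂ)^p *
      (((∑ i ∈ Finset.Icc (2*p - e) (min (2*p) e),
          (-1 : ℚ) ^ (p + i) * ((2*p).choose i : ℚ) * (e.factorial : ℚ) ^ 4 /
            (((e + i - 2*p).factorial : ℚ) ^ 2 * ((e - i).factorial : ℚ) ^ 2) : ℚ)) : ℂ) := by
  have hsub : Finset.Icc (2*p - e) (min (2*p) e) ⊆ Finset.range (2*p+1) := by
    intro i hi
    simp only [Finset.mem_Icc, Finset.mem_range] at *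
    omega
  have hz : ∀ i ∈ Finset.range (2*p+1), i ∉ Finset.Icc (2*p - e) (min (2*p) e) →
      co e (2*p) i = 0 := by
    intro i hr hni
    simp only [Finset.mem_Icc, Finset.mem_range, not_and_or, not_le] at hr hni
    have : e < 2*p - i ∨ e < i := by omega
    unfold co
    rcases this with h | h <;> rw [Nat.descFactorial_eq_zero_iff_lt.2 h] <;> simp
  rw [← Finset.sum_subset hsub hz]
  push_cast
  rw [Finset.mul_sum]
  refine Finset.sum_congr rfl fun i hi => ?_
  simp only [Finset.mem_Icc] at hi
  have := co_term_eq e p i hi.1 hi.2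
  push_cast at this
  exact this

/-! ### Main theorem -/

theorem stmt_11 (e p : ℕ) (he : 1 ≤ e) (hp : p ≤ e) (a b c : ℂ)
    (Q : MvPolynomial (Fin 2) ℂ)
    (hQ : Q = C a * X 0 ^ 2 + C b * X 0 * X 1 + C c * X 1 ^ 2)
    (hdisc : b ^ 2 - 4 * a * c ≠ 0) :
    MvPolynomial.aeval (![X 0, X 1, X 0, X 1] : Fin 4 → MvPolynomial (Fin 2) ℂ)
        ((Omega ^ (2 * p))
          (MvPolynomial.aeval (![X 0, X 1] : Fin 2 → MvPolynomial (Fin 4) ℂ) (Q ^ e) *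
            MvPolynomial.aeval (![X 2, X 3] : Fin 2 → MvPolynomial (Fin 4) ℂ) (Q ^ e)))
      = C (((∑ i ∈ Finset.Icc (2 * p - e) (min (2 * p) e),
              (-1 : ℚ) ^ (p + i) * (Nat.choose (2 * p) i : ℚ) * (Nat.factorial e : ℚ) ^ 4 /
                ((Nat.factorial (e + i - 2 * p) : ℚ) ^ 2 * (Nat.factorial (e - i) : ℚ) ^ 2) : ℚ) : ℂ) *
            (-(b ^ 2 - 4 * a * c)) ^ p) *
          Q ^ (2 * e - 2 * p) := by
  obtain ⟨α, β, γ, δ, h1, h2, h3⟩ := factor_quad a b c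
  have hQfac : Q = (C α * X 0 + C β * X 1) * (C γ * X 0 + C δ * X 1) := by
    rw [hQ, ← h1, ← h2, ← h3]
    simp only [map_mul, map_add]
    ring
  have hx : aeval (![X 0, X 1] : Fin 2 → MvPolynomial (Fin 4) ℂ) (Q ^ e)
      = (Lx α β)^e * (Lx γ δ)^e := by
    rw [map_pow, hQfac, map_mul, aeval_x_lin, aeval_x_lin, mul_pow]
  have hy : aeval (![X 2, X 3] : Fin 2 → MvPolynomial (Fin 4) ℂ) (Q ^ e)
      = (Ly α β)^e * (Ly γ δ)^e := by
    rw [map_pow, hQfac, map_mul, aeval_y_lin, aeval_y_lin, mul_pow]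
  rw [hx, hy]
  rw [show (Lx α β)^e * (Lx γ δ)^e * ((Ly α β)^e * (Ly γ δ)^e) = Sp α β γ δ e e e e from rfl]
  rw [Omega_pow_Sp, map_mul, aeval_diag_C, map_sum]
  have hterm : ∀ i ∈ Finset.range (2*p+1),
      aeval (![X 0, X 1, X 0, X 1] : Fin 4 → MvPolynomial (Fin 2) ℂ)
          (C (co e (2*p) i) * Sp α β γ δ (e-(2*p-i)) (e-i) (e-i) (e-(2*p-i)))
        = C (co e (2*p) i) * Q ^ (2*e - 2*p) := by
    intro i hi
    rw [Finset.mem_range] at hi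
    rw [map_mul, aeval_diag_C, aeval_diag_Sp]
    by_cases hc : 2*p - i ≤ e ∧ i ≤ e
    · have hE1 : (e-(2*p-i)) + (e-i) = 2*e-2*p := by omega
      have hE2 : (e-i) + (e-(2*p-i)) = 2*e-2*p := by omega
      rw [hE1, hE2, ← mul_pow, ← hQfac]
    · have hz : co e (2*p) i = 0 := by
        unfold co
        have : e < 2*p-i ∨ e < i := by omega
        rcases this with h | h <;> rw [Nat.descFactorial_eq_zero_iff_lt.2 h] <;> simp
      rw [hz]; simp
  rw [Finset.sum_congr rfl hterm, ← Finset.sum_mul,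
      ← map_sum (C : ℂ →+* MvPolynomial (Fin 2) ℂ), scalar_sum e p]
  have hD2 : (α*δ - β*γ)^2 = b^2 - 4*a*c := by rw [← h1, ← h2, ← h3]; ring
  rw [← hD2, neg_pow ((α*δ-β*γ)^2) p, ← pow_mul]
  rw [← mul_assoc, ← map_mul]
  exact congrArg (· * Q ^ (2*e - 2*p)) (congrArg C (by ring))
end
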